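/- arXiv:math/0311352 — 4 statements merged into one kernel-verified Lean document; each statement's English description precedes it below -/
import Mathlib

section
/- Let A be an n×n real symmetric matrix whose entries satisfy A_{ij} = γ_i δ_{ij} for 1 ≤ i, j ≤ n-1 (i.e., the top-left (n-1)×(n-1) block is diagonal with entries γ_1,...,γ_{n-1}), with last column entries A_{in} = a_i for i < n and A_{nn} = b. Then the characteristic polynomial of A satisfies det(tI_n - A) = (t - b) Σ_{i=0}^{n-1} (-1)^i s_i(γ) t^{n-1-i} - Σ_{i=1}^{n-1} a_i^2 Σ_{j=0}^{n-2} (-1)^j s_j(γ̂_i) t^{n-2-j}, where s_r(γ) is the r-th elementary symmetric polynomial of γ_1,...,γ_{n-1} and s_j(γ̂_i) is that of the list with γ_i omitted. -/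
open Finset

/-- The `r`-th elementary symmetric polynomial of the values of `x` on the index set `s`
(`s_0 = 1` by convention). -/
noncomputable def esymm {n : ℕ} (s : Finset (Fin n)) (r : ℕ) (x : Fin n → ℝ) : ℝ :=
  ∑ t ∈ s.powersetCard r, ∏ i ∈ t, x i

lemma esymm_eq_multiset {n : ℕ} (s : Finset (Fin n)) (r : ℕ) (x : Fin n → ℝ) :
    esymm s r x = (s.val.map x).esymm r := by
  rw [Finset.esymm_map_val]; rfl

lemma prod_sub_eq {n : ℕ} (γ : Fin n → ℝ) (s : Finset (Fin n)) (t : ℝ) :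
    ∏ i ∈ s, (t - γ i) =
      ∑ r ∈ range (s.card + 1), (-1 : ℝ) ^ r * esymm s r γ * t ^ (s.card - r) := by
  have h := congrArg (Polynomial.eval t)
    (Multiset.prod_X_sub_X_eq_sum_esymm (s.val.map γ))
  simp only [Polynomial.eval_multiset_prod, Multiset.map_map, Function.comp,
    Polynomial.eval_sub, Polynomial.eval_X, Polynomial.eval_C, Polynomial.eval_finset_sum,
    Polynomial.eval_mul, Polynomial.eval_pow, Polynomial.eval_neg, Polynomial.eval_one,
    Multiset.card_map] at h
  calc ∏ i ∈ s, (t - γ i) = (s.val.map fun i => t - γ i).prod :=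
        Finset.prod_eq_multiset_prod s _
    _ = _ := by
        rw [h]
        refine Finset.sum_congr rfl fun r _ => ?_
        rw [esymm_eq_multiset, Finset.card_def]
        ring

lemma det_arrow (k : ℕ) (γ a : Fin k → ℝ) (b : ℝ)
    (A : Matrix (Fin (k + 1)) (Fin (k + 1)) ℝ)
    (hdiag : ∀ i j : Fin k, A i.castSucc j.castSucc = if i = j then γ i else 0)
    (hcol : ∀ i : Fin k, A i.castSucc (Fin.last k) = a i)
    (hrow : ∀ i : Fin k, A (Fin.last k) i.castSucc = a i)
    (hcorner : A (Fin.last k) (Fin.last k) = b) :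
    ∀ t : ℝ,
      (t • (1 : Matrix (Fin (k + 1)) (Fin (k + 1)) ℝ) - A).det =
        (t - b) * ∏ i : Fin k, (t - γ i)
          - ∑ i : Fin k, (a i) ^ 2 * ∏ j ∈ univ.erase i, (t - γ j) := by
  have hf : Continuous fun t : ℝ => (t • (1 : Matrix (Fin (k + 1)) (Fin (k + 1)) ℝ) - A).det := by
    apply Continuous.matrix_det
    exact (continuous_id.smul continuous_const).sub continuous_const
  have hg : Continuous fun t : ℝ =>
      (t - b) * ∏ i : Fin k, (t - γ i)
        - ∑ i : Fin k, (a i) ^ 2 * ∏ j ∈ univ.erase i, (t - γ j) := by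
    fun_prop
  have hdense : Dense (Set.range γ)ᶜ :=
    Set.Countable.dense_compl ℝ (Set.finite_range γ).countable
  have key : Set.EqOn
      (fun t : ℝ => (t • (1 : Matrix (Fin (k + 1)) (Fin (k + 1)) ℝ) - A).det)
      (fun t : ℝ => (t - b) * ∏ i : Fin k, (t - γ i)
        - ∑ i : Fin k, (a i) ^ 2 * ∏ j ∈ univ.erase i, (t - γ j))
      (Set.range γ)ᶜ := by
    intro t ht
    have hne : ∀ i : Fin k, t - γ i ≠ 0 := by
      intro i
      rw [sub_ne_zero]
      exact fun h => ht ⟨i, h.symm⟩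
    set d : Fin k → ℝ := fun i => t - γ i with hd
    haveI : Invertible d := ⟨fun i => (d i)⁻¹,
      funext fun i => inv_mul_cancel₀ (hne i), funext fun i => mul_inv_cancel₀ (hne i)⟩
    haveI : Invertible (Matrix.diagonal d) := Matrix.diagonalInvertible d
    have hre : (t • (1 : Matrix (Fin (k + 1)) (Fin (k + 1)) ℝ) - A) =
        ((Matrix.fromBlocks (Matrix.diagonal d)
          (Matrix.of fun (i : Fin k) (_ : Fin 1) => -(a i))
          (Matrix.of fun (_ : Fin 1) (j : Fin k) => -(a j))
          (Matrix.of fun (_ _ : Fin 1) => t - b)).submatrix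
            finSumFinEquiv.symm finSumFinEquiv.symm) := by
      ext x y
      obtain ⟨i, rfl⟩ | rfl := Fin.eq_castSucc_or_eq_last x <;>
        obtain ⟨j, rfl⟩ | rfl := Fin.eq_castSucc_or_eq_last y
      · have hx : finSumFinEquiv.symm (i.castSucc) = Sum.inl i := by
          rw [Equiv.symm_apply_eq]; rfl
        have hy : finSumFinEquiv.symm (j.castSucc) = Sum.inl j := by
          rw [Equiv.symm_apply_eq]; rfl
        simp [Matrix.sub_apply, Matrix.smul_apply, Matrix.one_apply, hdiag, hx, hy,
          Matrix.diagonal_apply, Fin.castSucc_inj, hd]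
        by_cases h : i = j <;> simp [h]
      · have hx : finSumFinEquiv.symm (i.castSucc) = Sum.inl i := by
          rw [Equiv.symm_apply_eq]; rfl
        have hy : finSumFinEquiv.symm (Fin.last k) = Sum.inr 0 := by
          rw [Equiv.symm_apply_eq]
          simp [finSumFinEquiv, Fin.ext_iff]
        simp [Matrix.sub_apply, Matrix.smul_apply, Matrix.one_apply, hcol, hx, hy,
          (Fin.castSucc_lt_last i).ne]
      · have hx : finSumFinEquiv.symm (Fin.last k) = Sum.inr 0 := by
          rw [Equiv.symm_apply_eq]
          simp [finSumFinEquiv, Fin.ext_iff]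
        have hy : finSumFinEquiv.symm (j.castSucc) = Sum.inl j := by
          rw [Equiv.symm_apply_eq]; rfl
        simp [Matrix.sub_apply, Matrix.smul_apply, Matrix.one_apply, hrow, hx, hy,
          (Fin.castSucc_lt_last j).ne']
      · have hx : finSumFinEquiv.symm (Fin.last k) = Sum.inr 0 := by
          rw [Equiv.symm_apply_eq]
          simp [finSumFinEquiv, Fin.ext_iff]
        simp [Matrix.sub_apply, Matrix.smul_apply, Matrix.one_apply, hcorner, hx]
    simp only
    rw [hre, Matrix.det_submatrix_equiv_self, Matrix.det_fromBlocks₁₁]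
    have hinv : (⅟ (Matrix.diagonal d) : Matrix (Fin k) (Fin k) ℝ) =
        Matrix.diagonal fun i => (d i)⁻¹ := by
      rw [Matrix.invOf_diagonal_eq]
      exact congrArg Matrix.diagonal <| invOf_eq_right_inv (a := d) (b := fun i => (d i)⁻¹)
        (funext fun i => mul_inv_cancel₀ (hne i))
    rw [hinv, Matrix.det_diagonal, Matrix.det_fin_one]
    have hentry : (Matrix.of (fun (_ _ : Fin 1) => t - b) -
        Matrix.of (fun (_ : Fin 1) (j : Fin k) => -(a j)) *
          Matrix.diagonal (fun i => (d i)⁻¹) *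
          Matrix.of (fun (i : Fin k) (_ : Fin 1) => -(a i))) 0 0 =
        (t - b) - ∑ i : Fin k, a i ^ 2 * (d i)⁻¹ := by
      simp [Matrix.mul_apply, Matrix.diagonal_apply, Finset.sum_ite_eq,
        Matrix.sub_apply, mul_comm, pow_two]
      ring_nf
    rw [hentry, mul_sub, mul_comm, Finset.mul_sum]
    congr 1
    refine Finset.sum_congr rfl fun i _ => ?_
    rw [← Finset.mul_prod_erase univ d (mem_univ i)]
    simp only [hd]
    field_simp [hne i]
  intro t
  exact congrFun (Continuous.ext_on hdense hf hg key) t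

/-- Characteristic polynomial of an `n × n` (`n = k+1`) real symmetric "arrow" matrix with
diagonal block `diag(γ_1,...,γ_{n-1})`, last column `(a_1,...,a_{n-1},b)ᵀ`:
`det(tI - A) = (t - b) ∑_{i=0}^{n-1} (-1)^i s_i(γ) t^{n-1-i}
  - ∑_{i=1}^{n-1} a_i² ∑_{j=0}^{n-2} (-1)^j s_j(γ̂_i) t^{n-2-j}`. -/
theorem stmt_2 (k : ℕ) (γ a : Fin k → ℝ) (b : ℝ)
    (A : Matrix (Fin (k + 1)) (Fin (k + 1)) ℝ)
    (hdiag : ∀ i j : Fin k, A i.castSucc j.castSucc = if i = j then γ i else 0)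
    (hcol : ∀ i : Fin k, A i.castSucc (Fin.last k) = a i)
    (hrow : ∀ i : Fin k, A (Fin.last k) i.castSucc = a i)
    (hcorner : A (Fin.last k) (Fin.last k) = b) :
    ∀ t : ℝ,
      (t • (1 : Matrix (Fin (k + 1)) (Fin (k + 1)) ℝ) - A).det =
        (t - b) * ∑ i ∈ range (k + 1), (-1 : ℝ) ^ i * esymm univ i γ * t ^ (k - i)
          - ∑ i : Fin k, (a i) ^ 2 *
              ∑ j ∈ range k, (-1 : ℝ) ^ j * esymm (univ.erase i) j γ * t ^ (k - 1 - j) := by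
  intro t
  rw [det_arrow k γ a b A hdiag hcol hrow hcorner t]
  have h1 : ∏ i : Fin k, (t - γ i) =
      ∑ i ∈ range (k + 1), (-1 : ℝ) ^ i * esymm univ i γ * t ^ (k - i) := by
    have := prod_sub_eq γ (univ : Finset (Fin k)) t
    simpa using this
  rw [h1]
  congr 1
  refine Finset.sum_congr rfl fun i _ => ?_
  congr 1
  have hcard : (univ.erase i).card = k - 1 := by
    rw [Finset.card_erase_of_mem (mem_univ i)]
    simp
  have hk : k - 1 + 1 = k := Nat.succ_pred_eq_of_pos i.pos
  have := prod_sub_eq γ (univ.erase i) t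
  rw [hcard, hk] at this
  exact this
end

section
/- Let A be an n×n real symmetric arrow matrix with top-left diagonal block diag(γ_1,...,γ_{n-1}), last row/column entries a_1,...,a_{n-1} and corner entry b. Then for 3 ≤ r ≤ n, the r-th coefficient invariant S_r(A) (defined by det(tI - A) = Σ_{r=0}^n (-1)^r S_r t^{n-r}) satisfies S_r = s_r(γ) + s_{r-1}(γ) b - Σ_{i=1}^{n-1} s_{r-2}(γ̂_i) a_i^2. -/
open Finset

open Polynomial Matrix in
lemma coeff_prod_X_sub_C {k : ℕ} (γ : Fin k → ℝ) (s : Finset (Fin k)) (m : ℕ)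
    (hm : m ≤ s.card) :
    (∏ i ∈ s, (X - C (γ i))).coeff m = (-1) ^ (s.card - m) * esymm s (s.card - m) γ := by
  have h1 : ∏ i ∈ s, (X - C (γ i)) = ((s.val.map γ).map fun x => X - C x).prod := by
    rw [Multiset.map_map]; rfl
  have hcard : Multiset.card (s.val.map γ) = s.card := by simp
  rw [h1, Multiset.prod_X_sub_C_coeff _ (by simpa using hm), hcard]
  congr 1
  rw [Finset.esymm_map_val]
  rfl

lemma esymm_eq_zero {k : ℕ} (γ : Fin k → ℝ) (s : Finset (Fin k)) (m : ℕ) (hm : s.card < m) :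
    esymm s m γ = 0 := by
  rw [esymm, Finset.powersetCard_eq_empty.2 hm, Finset.sum_empty]

/-- For an `n × n` (`n = k+1`) real symmetric arrow matrix `A` with diagonal block
`diag(γ_1,...,γ_{n-1})`, last row/column entries `a_1,...,a_{n-1}` and corner `b`,
the invariants `S_r` defined by `det(tI - A) = ∑_{r=0}^n (-1)^r S_r t^{n-r}` satisfy, for
`3 ≤ r ≤ n`, `S_r = s_r(γ) + s_{r-1}(γ) b - ∑_{i=1}^{n-1} s_{r-2}(γ̂_i) a_i²`. -/
theorem stmt_3 (k : ℕ) (γ a : Fin k → ℝ) (b : ℝ)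
    (A : Matrix (Fin (k + 1)) (Fin (k + 1)) ℝ)
    (hdiag : ∀ i j : Fin k, A i.castSucc j.castSucc = if i = j then γ i else 0)
    (hcol : ∀ i : Fin k, A i.castSucc (Fin.last k) = a i)
    (hrow : ∀ i : Fin k, A (Fin.last k) i.castSucc = a i)
    (hcorner : A (Fin.last k) (Fin.last k) = b)
    (S : ℕ → ℝ)
    (hS : ∀ t : ℝ,
      (t • (1 : Matrix (Fin (k + 1)) (Fin (k + 1)) ℝ) - A).det =
        ∑ r ∈ range (k + 2), (-1 : ℝ) ^ r * S r * t ^ (k + 1 - r)) :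
    ∀ r, 3 ≤ r → r ≤ k + 1 →
      S r = esymm univ r γ + esymm univ (r - 1) γ * b
          - ∑ i : Fin k, esymm (univ.erase i) (r - 2) γ * (a i) ^ 2 := by
  intro r hr3 hrk
  open Polynomial Matrix in
  -- the polynomials
  set P : ℝ[X] := ∏ i : Fin k, (X - C (γ i)) with hP
  set Q : ℝ[X] := (X - C b) * P - ∑ i : Fin k, C (a i ^ 2) * ∏ j ∈ univ.erase i, (X - C (γ j))
    with hQ
  set Ps : ℝ[X] := ∑ r' ∈ range (k + 2), C ((-1 : ℝ) ^ r' * S r') * X ^ (k + 1 - r') with hPs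
  -- determinant evaluation for t avoiding the γ i
  have hdet : ∀ t : ℝ, (∀ i, t ≠ γ i) →
      (t • (1 : Matrix (Fin (k + 1)) (Fin (k + 1)) ℝ) - A).det = Q.eval t := by
    intro t ht
    have hd : ∀ i, t - γ i ≠ 0 := fun i => sub_ne_zero.2 (ht i)
    set d : Fin k → ℝ := fun i => t - γ i with hdd
    set M := t • (1 : Matrix (Fin (k + 1)) (Fin (k + 1)) ℝ) - A with hM
    have hsub : M.submatrix finSumFinEquiv finSumFinEquiv
        = fromBlocks (diagonal d) (Matrix.of fun i _ => -(a i)) (Matrix.of fun _ i => -(a i))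
            (Matrix.of fun _ _ => t - b) := by
      have hlast : finSumFinEquiv (Sum.inr (0 : Fin 1)) = Fin.last k := by
        ext; simp [finSumFinEquiv]
      have hcast : ∀ i : Fin k, finSumFinEquiv (Sum.inl i) = (i : Fin k).castSucc := by
        intro i; ext; simp [finSumFinEquiv]
      ext x y
      cases x with
      | inl i => cases y with
        | inl j =>
          simp [hM, hcast, hdiag, Matrix.one_apply, diagonal_apply, Fin.castSucc_inj]
          split <;> simp_all
        | inr j =>
          simp [hM, hcast, hlast, Subsingleton.elim j 0, hcol, Matrix.one_apply,
            (Fin.castSucc_lt_last i).ne]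
      | inr i => cases y with
        | inl j =>
          simp [hM, hcast, hlast, Subsingleton.elim i 0, hrow, Matrix.one_apply,
            (Fin.castSucc_lt_last j).ne']
        | inr j =>
          simp [hM, hlast, Subsingleton.elim i 0, Subsingleton.elim j 0, hcorner,
            Matrix.one_apply]
    have hblock : (fromBlocks (diagonal d) (Matrix.of fun i _ => -(a i)) (Matrix.of fun _ i => -(a i))
        (Matrix.of fun _ _ => t - b) : Matrix (Fin k ⊕ Fin 1) (Fin k ⊕ Fin 1) ℝ).det
        = (∏ i, d i) * ((t - b) - ∑ i, a i ^ 2 * (d i)⁻¹) := by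
      haveI : Invertible (diagonal d) :=
        ⟨diagonal (fun i => (d i)⁻¹), by
          rw [diagonal_mul_diagonal]
          convert diagonal_one using 2
          exact funext fun i => inv_mul_cancel₀ (hd i), by
          rw [diagonal_mul_diagonal]
          convert diagonal_one using 2
          exact funext fun i => mul_inv_cancel₀ (hd i)⟩
      rw [det_fromBlocks₁₁]
      have hinv : ⅟(diagonal d) = diagonal (fun i => (d i)⁻¹) :=
        invOf_eq_right_inv (by
          rw [diagonal_mul_diagonal]
          convert diagonal_one using 2
          exact funext fun i => mul_inv_cancel₀ (hd i))
      rw [hinv, det_diagonal, Matrix.det_fin_one]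
      congr 1
      simp [Matrix.mul_apply, Matrix.mul_diagonal, Matrix.diagonal_apply, pow_two,
        mul_ite, ite_mul, mul_assoc]
      exact Finset.sum_congr rfl fun i _ => by ring
    have : M.det = (∏ i, d i) * ((t - b) - ∑ i, a i ^ 2 * (d i)⁻¹) := by
      rw [← Matrix.det_submatrix_equiv_self finSumFinEquiv M, hsub, hblock]
    rw [this, hQ, hP]
    simp only [eval_sub, eval_mul, eval_prod, eval_X, eval_C, eval_finset_sum, eval_pow]
    rw [mul_sub, Finset.mul_sum]
    congr 1
    · simp only [hdd]; ring_nf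
    · refine Finset.sum_congr rfl fun i _ => ?_
      have : (∏ j, d j) = d i * ∏ j ∈ univ.erase i, d j :=
        (Finset.mul_prod_erase univ d (mem_univ i)).symm
      rw [this]
      simp only [hdd]
      field_simp [hd i]
  -- Ps and Q agree as polynomials
  have hPsQ : Ps = Q := by
    apply Polynomial.eq_of_infinite_eval_eq
    apply Set.Infinite.mono (s := (Set.range γ)ᶜ)
    · intro t ht
      have ht' : ∀ i, t ≠ γ i := by
        intro i hti; exact ht ⟨i, hti.symm⟩
      have h1 : Ps.eval t = ∑ r' ∈ range (k + 2), (-1 : ℝ) ^ r' * S r' * t ^ (k + 1 - r') := by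
        rw [hPs, Polynomial.eval_finset_sum]
        exact Finset.sum_congr rfl fun r' _ => by simp
      show Ps.eval t = Q.eval t
      rw [h1, ← hS t, hdet t ht']
    · exact Set.Infinite.mono (fun x hx => hx) ((Set.finite_range γ).infinite_compl)
  -- extract the coefficient of degree k+1-r
  have hco := congrArg (fun p : ℝ[X] => p.coeff (k + 1 - r)) hPsQ
  have hPs_coeff : Ps.coeff (k + 1 - r) = (-1 : ℝ) ^ r * S r := by
    rw [hPs, Polynomial.finset_sum_coeff]
    rw [Finset.sum_eq_single r]
    · rw [Polynomial.coeff_C_mul, Polynomial.coeff_X_pow, if_pos rfl, mul_one]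
    · intro r' hr' hne
      simp only [Polynomial.coeff_C_mul, Polynomial.coeff_X_pow]
      rw [if_neg, mul_zero]
      rw [Finset.mem_range] at hr'
      omega
    · intro h
      exact absurd (Finset.mem_range.2 (by omega)) h
  have hPcoeff : ∀ m ≤ k, P.coeff m = (-1 : ℝ) ^ (k - m) * esymm univ (k - m) γ := by
    intro m hm
    rw [hP, coeff_prod_X_sub_C γ univ m (by simpa using hm)]
    simp
  have hXP : (X * P).coeff (k + 1 - r) = (-1 : ℝ) ^ r * esymm univ r γ := by
    rcases Nat.eq_zero_or_pos (k + 1 - r) with h0 | hpos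
    · have hrk1 : r = k + 1 := by omega
      rw [h0, Polynomial.mul_coeff_zero, Polynomial.coeff_X_zero, zero_mul]
      rw [esymm_eq_zero γ univ r (by simp [hrk1]), mul_zero]
    · obtain ⟨m, hm⟩ : ∃ m, k + 1 - r = m + 1 := ⟨k - r, by omega⟩
      rw [hm, Polynomial.coeff_X_mul, hPcoeff m (by omega)]
      congr 2 <;> omega
  have hQcoeff : Q.coeff (k + 1 - r)
      = (-1:ℝ)^r * esymm univ r γ + (-1:ℝ)^r * (esymm univ (r-1) γ * b)
        - (-1:ℝ)^r * ∑ i : Fin k, esymm (univ.erase i) (r - 2) γ * (a i) ^ 2 := by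
    rw [hQ, Polynomial.coeff_sub, sub_mul, Polynomial.coeff_sub, hXP,
      Polynomial.coeff_C_mul, Polynomial.finset_sum_coeff]
    have hbP : P.coeff (k + 1 - r) = (-1 : ℝ) ^ (r - 1) * esymm univ (r - 1) γ := by
      rw [hPcoeff (k + 1 - r) (by omega)]
      congr 2 <;> omega
    have hsum : ∀ i : Fin k, (C (a i ^ 2) * ∏ j ∈ univ.erase i, (X - C (γ j))).coeff (k + 1 - r)
        = a i ^ 2 * ((-1 : ℝ) ^ (r - 2) * esymm (univ.erase i) (r - 2) γ) := by
      intro i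
      have hc : (univ.erase i).card = k - 1 := by
        simp [Finset.card_erase_of_mem (mem_univ i)]
      rw [Polynomial.coeff_C_mul, coeff_prod_X_sub_C γ (univ.erase i) _ (by rw [hc]; omega), hc,
        show k - 1 - (k + 1 - r) = r - 2 by omega]
    rw [hbP, Finset.sum_congr rfl fun i _ => hsum i]
    obtain ⟨m, hm⟩ : ∃ m, r = m + 3 := ⟨r - 3, by omega⟩
    subst hm
    simp only [show m + 3 - 1 = m + 2 from rfl, show m + 3 - 2 = m + 1 from rfl]
    have e2 : ((-1 : ℝ)) ^ (m + 2) = -(-1 : ℝ) ^ (m + 3) := by ring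
    have e1 : ((-1 : ℝ)) ^ (m + 1) = (-1 : ℝ) ^ (m + 3) := by ring
    rw [e2, Finset.sum_congr rfl (fun i _ => by rw [e1]; ring :
      ∀ i ∈ (univ : Finset (Fin k)), a i ^ 2 * ((-1 : ℝ) ^ (m + 1) * esymm (univ.erase i) (m + 1) γ)
        = (-1 : ℝ) ^ (m + 3) * (esymm (univ.erase i) (m + 1) γ * a i ^ 2)),
      ← Finset.mul_sum]
    ring
  rw [hPs_coeff, hQcoeff] at hco
  have hpow : ((-1 : ℝ) ^ r) * ((-1 : ℝ) ^ r) = 1 := by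
    rw [← pow_add]; exact Even.neg_one_pow ⟨r, by ring⟩
  have := congrArg (fun x => (-1 : ℝ) ^ r * x) hco
  rw [← mul_assoc, hpow, one_mul] at this
  have h2 : ∀ x : ℝ, (-1 : ℝ) ^ r * ((-1 : ℝ) ^ r * x) = x := fun x => by
    rw [← mul_assoc, hpow, one_mul]
  rw [this, mul_sub, mul_add, h2, h2, h2]
end

section
/- Let A be a self-adjoint endomorphism of an n-dimensional real inner product space with eigenvalues κ_1,...,κ_n, and let T_r be its r-th Newton transformation, defined inductively by T_0 = I and T_r = S_r I - A T_{r-1}, where S_r is the r-th elementary symmetric function of the eigenvalues. Then each eigenvector e_i of A (with eigenvalue κ_i) is an eigenvector of T_r with eigenvalue μ_{i,r} = s_r(κ_1,...,κ̂_i,...,κ_n), the r-th elementary symmetric function of the eigenvalues omitting κ_i. -/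
open Finset

/-- The Newton transformations of an endomorphism `A`, relative to the invariants `S`:
`T_0 = I`, `T_r = S_r • I - A ∘ T_{r-1}`. -/
noncomputable def newton {E : Type*} [AddCommGroup E] [Module ℝ E]
    (A : Module.End ℝ E) (S : ℕ → ℝ) : ℕ → Module.End ℝ E
  | 0 => 1
  | r + 1 => S (r + 1) • 1 - A * newton A S r

lemma esymm_split {n : ℕ} (i : Fin n) (r : ℕ) (κ : Fin n → ℝ) :
    esymm univ (r + 1) κ = esymm (univ.erase i) (r + 1) κ + κ i * esymm (univ.erase i) r κ := by
  have h : (univ : Finset (Fin n)) = insert i (univ.erase i) :=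
    (insert_erase (mem_univ i)).symm
  have hp : powersetCard (r + 1) (univ : Finset (Fin n)) =
      powersetCard (r + 1) (univ.erase i) ∪ (powersetCard r (univ.erase i)).image (insert i) := by
    conv_lhs => rw [h]
    exact powersetCard_succ_insert (notMem_erase i univ) r
  unfold esymm
  rw [hp, sum_union, Finset.mul_sum, sum_image]
  · congr 1
    refine sum_congr rfl fun t ht => ?_
    rw [prod_insert fun hi => (notMem_erase i univ) ((mem_powersetCard.1 ht).1 hi)]
  · intro a ha b hb hab
    have hia : i ∉ a := fun hi => (notMem_erase i univ) ((mem_powersetCard.1 ha).1 hi)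
    have hib : i ∉ b := fun hi => (notMem_erase i univ) ((mem_powersetCard.1 hb).1 hi)
    rw [← erase_insert hia, ← erase_insert hib, hab]
  · rw [disjoint_right]
    intro t ht ht'
    obtain ⟨u, hu, rfl⟩ := mem_image.1 ht
    exact (notMem_erase i univ) ((mem_powersetCard.1 ht').1 (mem_insert_self i u))

/-- Each eigenvector `v i` of a self-adjoint endomorphism `A` of an `n`-dimensional real inner
product space (with eigenvalue `κ i`) is an eigenvector of the Newton transformation `T_r`
with eigenvalue `μ_{i,r} = s_r(κ_1,...,κ̂_i,...,κ_n)`. -/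
theorem stmt_4 {E : Type*} [NormedAddCommGroup E] [InnerProductSpace ℝ E]
    [FiniteDimensional ℝ E] (n : ℕ) (hdim : Module.finrank ℝ E = n)
    (A : Module.End ℝ E) (hA : LinearMap.IsSymmetric (A : E →ₗ[ℝ] E))
    (κ : Fin n → ℝ) (v : OrthonormalBasis (Fin n) ℝ E)
    (hv : ∀ i, A (v i) = κ i • v i) :
    ∀ r, r ≤ n → ∀ i,
      newton A (fun j => esymm univ j κ) r (v i) = esymm (univ.erase i) r κ • v i := by
  intro r hr i
  induction r with
  | zero => simp [newton, esymm]
  | succ r ih =>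
    have : newton A (fun j => esymm univ j κ) (r + 1) (v i)
        = esymm univ (r + 1) κ • v i - A (esymm (univ.erase i) r κ • v i) := by
      simp [newton, ih (Nat.le_of_succ_le hr)]
    rw [this, map_smul, hv, esymm_split i r κ, add_smul, smul_smul]
    module
end

section
/- Let A be a self-adjoint endomorphism of an n-dimensional real inner product space and T_r its r-th Newton transformation (T_0 = I, T_r = S_r I - A T_{r-1}). Then trace(T_r) = (n - r) S_r for 0 ≤ r ≤ n, where S_r is the r-th elementary symmetric function of the eigenvalues of A. -/
open Finset

lemma esymm_insert {n r : ℕ} (i : Fin n) (s : Finset (Fin n)) (hi : i ∉ s) (x : Fin n → ℝ) :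
    esymm (insert i s) (r + 1) x = esymm s (r + 1) x + x i * esymm s r x := by
  unfold esymm
  rw [powersetCard_succ_insert hi, sum_union, sum_image, mul_sum]
  · congr 1
    refine sum_congr rfl fun t ht => ?_
    rw [prod_insert (fun h => hi ((mem_powersetCard.mp ht).1 h))]
  · intro t ht u hu htu
    have hit : i ∉ t := fun h => hi ((mem_powersetCard.mp ht).1 h)
    have hiu : i ∉ u := fun h => hi ((mem_powersetCard.mp hu).1 h)
    rwa [insert_erase_invOn.2.injOn.eq_iff] at htu <;> simp [hit, hiu]
  · rw [disjoint_right]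
    intro t ht hts
    obtain ⟨u, hu, rfl⟩ := mem_image.mp ht
    exact hi ((mem_powersetCard.mp hts).1 (mem_insert_self i u))

lemma newton_apply {E : Type*} [AddCommGroup E] [Module ℝ E] {n : ℕ}
    (A : Module.End ℝ E) (κ : Fin n → ℝ) (v : Fin n → E)
    (hv : ∀ i, A (v i) = κ i • v i) (r : ℕ) (i : Fin n) :
    newton A (fun j => esymm univ j κ) r (v i) = esymm (univ.erase i) r κ • v i := by
  induction r with
  | zero => simp [newton, esymm]
  | succ r ih =>
    have key : esymm univ (r + 1) κ
        = esymm (univ.erase i) (r + 1) κ + κ i * esymm (univ.erase i) r κ := by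
      conv_lhs => rw [← insert_erase (mem_univ i)]
      exact esymm_insert i _ (notMem_erase _ _) κ
    simp only [newton, LinearMap.sub_apply, LinearMap.smul_apply, Module.End.one_apply,
      Module.End.mul_apply, ih, map_smul, hv i, key]
    rw [smul_smul]
    module

/-- For a self-adjoint endomorphism `A` of an `n`-dimensional real inner product space with
eigenvalues `κ`, the Newton transformations satisfy `trace T_r = (n - r) S_r` for `0 ≤ r ≤ n`,
where `S_r` is the `r`-th elementary symmetric function of the eigenvalues. -/
theorem stmt_5 {E : Type*} [NormedAddCommGroup E] [InnerProductSpace ℝ E]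
    [FiniteDimensional ℝ E] (n : ℕ) (hdim : Module.finrank ℝ E = n)
    (A : Module.End ℝ E) (hA : LinearMap.IsSymmetric (A : E →ₗ[ℝ] E))
    (κ : Fin n → ℝ) (v : OrthonormalBasis (Fin n) ℝ E)
    (hv : ∀ i, A (v i) = κ i • v i) :
    ∀ r, r ≤ n →
      LinearMap.trace ℝ E (newton A (fun j => esymm univ j κ) r) =
        ((n : ℝ) - r) * esymm univ r κ := by
  intro r hr
  have hb := v.toBasis
  rw [LinearMap.trace_eq_matrix_trace ℝ v.toBasis]
  have hdiag : ∀ i, (LinearMap.toMatrix v.toBasis v.toBasis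
      (newton A (fun j => esymm univ j κ) r)) i i = esymm (univ.erase i) r κ := by
    intro i
    rw [LinearMap.toMatrix_apply]
    simp [newton_apply A κ (v : Fin n → E) hv r i]
  rw [Matrix.trace]
  simp only [Matrix.diag_apply, hdiag]
  -- now ∑ i, esymm (univ.erase i) r κ = (n - r) * esymm univ r κ
  have : ∀ i : Fin n, esymm (univ.erase i) r κ
      = ∑ t ∈ univ.powersetCard r, if i ∉ t then ∏ j ∈ t, κ j else 0 := by
    intro i
    rw [sum_ite, sum_const_zero, add_zero]
    unfold esymm
    congr 1
    ext t
    simp [mem_powersetCard, subset_erase, and_assoc, and_comm]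
  simp only [this]
  rw [sum_comm]
  have h2 : ∀ t ∈ univ.powersetCard r,
      (∑ i : Fin n, if i ∉ t then ∏ j ∈ t, κ j else 0) = ((n : ℝ) - r) * ∏ j ∈ t, κ j := by
    intro t ht
    rw [sum_ite, sum_const_zero, add_zero, sum_const, nsmul_eq_mul]
    have hcard : (univ.filter (· ∉ t)).card = n - r := by
      have := (mem_powersetCard.mp ht).2
      simp [filter_not, card_sdiff_of_subset (subset_univ t), this]
    rw [hcard, Nat.cast_sub hr]
  rw [sum_congr rfl h2, ← mul_sum]
  rfl
end
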